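/- arXiv:2503.14840 — 2 statements merged into one kernel-verified Lean document; each statement's English description precedes it below -/
import Mathlib

section
/- The Long–Moody matrices S_i preserve the Hermitian form H̃: S_i^† H̃ S_i = H̃ for all 1 ≤ i ≤ n−1. -/
open Matrix

namespace KLM

variable {k : Type*} [Field k]

/-- Assemble an `Nn × Nn` matrix from an `n × n` array of `N × N` blocks,
blocks being indexed by natural numbers (only indices `< n` are relevant). -/
def blk (n N : ℕ) (B : ℕ → ℕ → Matrix (Fin N) (Fin N) k) :
    Matrix (Fin n × Fin N) (Fin n × Fin N) k :=
  Matrix.of fun p q => B p.1.1 q.1.1 p.2 q.2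

/-- The Dettweiler–Reiter convolution matrix `G_j = ρ^{DR}_λ(x_j)` (0-based index `j`):
the identity except that the `j`-th block row is
`(λ(g_0−1), …, λ(g_{j−1}−1), λ g_j, g_{j+1}−1, …, g_{n−1}−1)`. -/
def G (n N : ℕ) (g : ℕ → Matrix (Fin N) (Fin N) k) (lam : k) (j : ℕ) :
    Matrix (Fin n × Fin N) (Fin n × Fin N) k :=
  blk n N fun r c =>
    if r = j then
      (if c < j then lam • (g c - 1) else if c = j then lam • g j else g c - 1)
    else if r = c then 1 else 0

/-- The Long–Moody matrix `S_i = ρ^{LM}(σ_i)` (0-based index `i`):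
`(s_i ⊕ ⋯ ⊕ s_i) · diag(1, …, 1, R_i, 1, …, 1)` where `R_i` is the
`2×2` block matrix with rows `(0, g_i)` and `(1, 1 − g_{i+1})`
placed in block rows/columns `i, i+1`. -/
def S (n N : ℕ) (g s : ℕ → Matrix (Fin N) (Fin N) k) (i : ℕ) :
    Matrix (Fin n × Fin N) (Fin n × Fin N) k :=
  blk n N fun r c =>
    if r = i ∧ c = i then 0
    else if r = i ∧ c = i + 1 then s i * g i
    else if r = i + 1 ∧ c = i then s i
    else if r = i + 1 ∧ c = i + 1 then s i * (1 - g (i + 1))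
    else if r = c then s i
    else 0

/-- The Hermitian matrix `H̃` of the monodromy-invariant form: its `(j,c)` block is
`μ⁻¹ H (g_j⁻¹ − 1)(g_c − 1)` for `j < c`, `μ⁻¹ H (g_j⁻¹ − λ)(g_j − 1)` for `j = c`
(with `λ = μ²`), and `μ H (g_j⁻¹ − 1)(g_c − 1)` for `j > c`. -/
noncomputable def Ht (n N : ℕ) (g : ℕ → Matrix (Fin N) (Fin N) ℂ) (H : Matrix (Fin N) (Fin N) ℂ)
    (mu : ℂ) : Matrix (Fin n × Fin N) (Fin n × Fin N) ℂ :=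
  blk n N fun j c =>
    if j < c then mu⁻¹ • (H * ((g j)⁻¹ - 1) * (g c - 1))
    else if j = c then
      mu⁻¹ • (H * ((g j)⁻¹ - mu ^ 2 • (1 : Matrix (Fin N) (Fin N) ℂ)) * (g j - 1))
    else mu • (H * ((g j)⁻¹ - 1) * (g c - 1))


/-! ### Auxiliary machinery for the proof -/

section aux


lemma blk_conjT (n N : ℕ) (B : ℕ → ℕ → Matrix (Fin N) (Fin N) ℂ) :
    (blk n N B)ᴴ = blk n N (fun r c => (B c r)ᴴ) := by
  ext p q
  simp [blk, conjTranspose_apply]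

lemma blk_mul (n N : ℕ) (B C : ℕ → ℕ → Matrix (Fin N) (Fin N) ℂ) :
    blk n N B * blk n N C = blk n N (fun r c => ∑ m : Fin n, B r m.1 * C m.1 c) := by
  ext p q
  simp only [blk, Matrix.mul_apply, Matrix.of_apply, Matrix.sum_apply, Fintype.sum_prod_type]

lemma blk_ext {n N : ℕ} {B C : ℕ → ℕ → Matrix (Fin N) (Fin N) ℂ}
    (h : ∀ r c : Fin n, B r.1 c.1 = C r.1 c.1) : blk n N B = blk n N C := by
  ext p q
  exact congrFun (congrFun (h p.1 q.1) p.2) q.2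

noncomputable def SBf (N : ℕ) (g s : ℕ → Matrix (Fin N) (Fin N) ℂ) (i : ℕ) :
    ℕ → ℕ → Matrix (Fin N) (Fin N) ℂ := fun r c =>
  if r = i ∧ c = i then 0
  else if r = i ∧ c = i + 1 then s i * g i
  else if r = i + 1 ∧ c = i then s i
  else if r = i + 1 ∧ c = i + 1 then s i * (1 - g (i + 1))
  else if r = c then s i
  else 0

noncomputable def HBf (N : ℕ) (g : ℕ → Matrix (Fin N) (Fin N) ℂ) (H : Matrix (Fin N) (Fin N) ℂ)
    (mu : ℂ) : ℕ → ℕ → Matrix (Fin N) (Fin N) ℂ := fun j c =>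
  if j < c then mu⁻¹ • (H * ((g j)⁻¹ - 1) * (g c - 1))
  else if j = c then
    mu⁻¹ • (H * ((g j)⁻¹ - mu ^ 2 • (1 : Matrix (Fin N) (Fin N) ℂ)) * (g j - 1))
  else mu • (H * ((g j)⁻¹ - 1) * (g c - 1))

variable {N n : ℕ} (g s : ℕ → Matrix (Fin N) (Fin N) ℂ) (H : Matrix (Fin N) (Fin N) ℂ) (mu : ℂ)

lemma HBf_lt {j c : ℕ} (h : j < c) :
    HBf N g H mu j c = mu⁻¹ • (H * ((g j)⁻¹ - 1) * (g c - 1)) := by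
  simp [HBf, h]

lemma HBf_diag (j : ℕ) :
    HBf N g H mu j j
      = mu⁻¹ • (H * ((g j)⁻¹ - mu ^ 2 • (1 : Matrix (Fin N) (Fin N) ℂ)) * (g j - 1)) := by
  simp [HBf]

lemma HBf_gt {j c : ℕ} (h : c < j) :
    HBf N g H mu j c = mu • (H * ((g j)⁻¹ - 1) * (g c - 1)) := by
  have h1 : ¬ j < c := by omega
  have h2 : j ≠ c := by omega
  simp [HBf, h1, h2]

lemma col_i {i : ℕ} (hi : i + 1 < n) (f : ℕ → Matrix (Fin N) (Fin N) ℂ)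
    {c : Fin n} (hc : (c : ℕ) = i) :
    ∑ b : Fin n, f b.1 * SBf N g s i b.1 c.1 = f (i + 1) * s i := by
  rw [Finset.sum_eq_single (⟨i + 1, hi⟩ : Fin n)]
  · have : SBf N g s i (i + 1) i = s i := by simp [SBf]
    rw [show ((⟨i + 1, hi⟩ : Fin n) : ℕ) = i + 1 from rfl, hc, this]
  · intro b _ hb
    have hb' : (b : ℕ) ≠ i + 1 := fun h => hb (Fin.ext h)
    rw [hc]
    rcases eq_or_ne b.1 i with h | h <;> simp [SBf, h, hb']
  · intro h; exact absurd (Finset.mem_univ _) h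

lemma col_i1 {i : ℕ} (hi : i + 1 < n) (f : ℕ → Matrix (Fin N) (Fin N) ℂ)
    {c : Fin n} (hc : (c : ℕ) = i + 1) :
    ∑ b : Fin n, f b.1 * SBf N g s i b.1 c.1
      = f i * (s i * g i) + f (i + 1) * (s i * (1 - g (i + 1))) := by
  have hii : i < n := by omega
  have hne : (⟨i, hii⟩ : Fin n) ≠ ⟨i + 1, hi⟩ := by simp [Fin.ext_iff]
  have key : ∑ b : Fin n, f b.1 * SBf N g s i b.1 c.1
      = ∑ b ∈ ({⟨i, hii⟩, ⟨i + 1, hi⟩} : Finset (Fin n)), f b.1 * SBf N g s i b.1 c.1 := by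
    refine (Finset.sum_subset (Finset.subset_univ _) fun b _ hb => ?_).symm
    simp only [Finset.mem_insert, Finset.mem_singleton] at hb
    push_neg at hb
    have h1 : (b : ℕ) ≠ i := fun h => hb.1 (Fin.ext h)
    have h2 : (b : ℕ) ≠ i + 1 := fun h => hb.2 (Fin.ext h)
    simp [SBf, h1, h2, hc]
  rw [key, Finset.sum_insert (by simpa using hne), Finset.sum_singleton]
  have e1 : SBf N g s i i (i + 1) = s i * g i := by simp [SBf]
  have e2 : SBf N g s i (i + 1) (i + 1) = s i * (1 - g (i + 1)) := by simp [SBf]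
  rw [show ((⟨i, hii⟩ : Fin n) : ℕ) = i from rfl, show ((⟨i + 1, hi⟩ : Fin n) : ℕ) = i + 1 from rfl,
    hc, e1, e2]

lemma col_gen {i : ℕ} (f : ℕ → Matrix (Fin N) (Fin N) ℂ)
    {c : Fin n} (hc1 : (c : ℕ) ≠ i) (hc2 : (c : ℕ) ≠ i + 1) :
    ∑ b : Fin n, f b.1 * SBf N g s i b.1 c.1 = f c.1 * s i := by
  rw [Finset.sum_eq_single c]
  · have : SBf N g s i c.1 c.1 = s i := by simp [SBf, hc1, hc2]
    rw [this]
  · intro b _ hb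
    have hb' : (b : ℕ) ≠ c.1 := fun h => hb (Fin.ext h)
    simp [SBf, hc1, hc2, hb']
  · intro h; exact absurd (Finset.mem_univ _) h

lemma row_i {i : ℕ} (hi : i + 1 < n) (h : ℕ → Matrix (Fin N) (Fin N) ℂ)
    {r : Fin n} (hr : (r : ℕ) = i) :
    ∑ a : Fin n, (SBf N g s i a.1 r.1)ᴴ * h a.1 = (s i)ᴴ * h (i + 1) := by
  rw [Finset.sum_eq_single (⟨i + 1, hi⟩ : Fin n)]
  · have : SBf N g s i (i + 1) i = s i := by simp [SBf]
    rw [show ((⟨i + 1, hi⟩ : Fin n) : ℕ) = i + 1 from rfl, hr, this]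
  · intro b _ hb
    have hb' : (b : ℕ) ≠ i + 1 := fun h => hb (Fin.ext h)
    rw [hr]
    rcases eq_or_ne b.1 i with h | h <;> simp [SBf, h, hb']
  · intro h; exact absurd (Finset.mem_univ _) h

lemma row_i1 {i : ℕ} (hi : i + 1 < n) (h : ℕ → Matrix (Fin N) (Fin N) ℂ)
    {r : Fin n} (hr : (r : ℕ) = i + 1) :
    ∑ a : Fin n, (SBf N g s i a.1 r.1)ᴴ * h a.1
      = (s i * g i)ᴴ * h i + (s i * (1 - g (i + 1)))ᴴ * h (i + 1) := by
  have hii : i < n := by omega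
  have hne : (⟨i, hii⟩ : Fin n) ≠ ⟨i + 1, hi⟩ := by simp [Fin.ext_iff]
  have key : ∑ a : Fin n, (SBf N g s i a.1 r.1)ᴴ * h a.1
      = ∑ a ∈ ({⟨i, hii⟩, ⟨i + 1, hi⟩} : Finset (Fin n)), (SBf N g s i a.1 r.1)ᴴ * h a.1 := by
    refine (Finset.sum_subset (Finset.subset_univ _) fun b _ hb => ?_).symm
    simp only [Finset.mem_insert, Finset.mem_singleton] at hb
    push_neg at hb
    have h1 : (b : ℕ) ≠ i := fun hx => hb.1 (Fin.ext hx)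
    have h2 : (b : ℕ) ≠ i + 1 := fun hx => hb.2 (Fin.ext hx)
    simp [SBf, h1, h2, hr]
  rw [key, Finset.sum_insert (by simpa using hne), Finset.sum_singleton]
  have e1 : SBf N g s i i (i + 1) = s i * g i := by simp [SBf]
  have e2 : SBf N g s i (i + 1) (i + 1) = s i * (1 - g (i + 1)) := by simp [SBf]
  rw [show ((⟨i, hii⟩ : Fin n) : ℕ) = i from rfl, show ((⟨i + 1, hi⟩ : Fin n) : ℕ) = i + 1 from rfl,
    hr, e1, e2]

lemma row_gen {i : ℕ} (h : ℕ → Matrix (Fin N) (Fin N) ℂ)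
    {r : Fin n} (hr1 : (r : ℕ) ≠ i) (hr2 : (r : ℕ) ≠ i + 1) :
    ∑ a : Fin n, (SBf N g s i a.1 r.1)ᴴ * h a.1 = (s i)ᴴ * h r.1 := by
  rw [Finset.sum_eq_single r]
  · have : SBf N g s i r.1 r.1 = s i := by simp [SBf, hr1, hr2]
    rw [this]
  · intro b _ hb
    have hb' : (b : ℕ) ≠ r.1 := fun h => hb (Fin.ext h)
    simp [SBf, hr1, hr2, hb']
  · intro h; exact absurd (Finset.mem_univ _) h


section helpers
variable {N : ℕ}

lemma move (s si : Matrix (Fin N) (Fin N) ℂ) (hss : s * si = 1) (hsis : si * s = 1)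
    (X Y : Matrix (Fin N) (Fin N) ℂ) (h : X * s = s * Y) :
    ∀ z, si * (X * z) = Y * (si * z) := by
  have h1 : si * X = Y * si := by
    calc si * X = si * ((X * s) * si) := by rw [mul_assoc X s si, hss, mul_one]
    _ = si * ((s * Y) * si) := by rw [h]
    _ = Y * si := by rw [← mul_assoc, ← mul_assoc, hsis, one_mul]
  intro z; rw [← mul_assoc, h1, mul_assoc]

lemma swap_inv (s w wi : Matrix (Fin N) (Fin N) ℂ) (hw : w * wi = 1) (hwi : wi * w = 1)
    (h : w * s = s * w) : wi * s = s * wi := by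
  calc wi * s = wi * ((s * w) * wi) := by rw [mul_assoc s w wi, hw, mul_one]
  _ = wi * ((w * s) * wi) := by rw [h]
  _ = s * wi := by rw [← mul_assoc, ← mul_assoc, hwi, one_mul]

lemma dstar (s si H : Matrix (Fin N) (Fin N) ℂ) (hss : s * si = 1) (hsH : sᴴ * H * s = H) :
    ∀ z, sᴴ * (H * z) = H * (si * z) := by
  have h1 : sᴴ * H = H * si := by
    calc sᴴ * H = (sᴴ * H * s) * si := by rw [mul_assoc (sᴴ * H) s si, hss, mul_one]
    _ = H * si := by rw [hsH]
  intro z; rw [← mul_assoc, h1, mul_assoc]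

lemma cancel_left (w wi : Matrix (Fin N) (Fin N) ℂ) (hwi : wi * w = 1) :
    ∀ z, wi * (w * z) = z := by
  intro z; rw [← mul_assoc, hwi, one_mul]

end helpers


set_option maxHeartbeats 2000000 in
theorem S_preserves_Ht'
    (N n : ℕ) (hN : 1 ≤ N) (hn : 2 ≤ n)
    (g s : ℕ → Matrix (Fin N) (Fin N) ℂ)
    (hgu : ∀ j, j < n → IsUnit (g j))
    (hsu : ∀ i, i + 1 < n → IsUnit (s i))
    (hbr1 : ∀ i, i + 2 < n → s i * s (i + 1) * s i = s (i + 1) * s i * s (i + 1))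
    (hbr2 : ∀ i j, i + 1 < n → j + 1 < n → (i + 2 ≤ j ∨ j + 2 ≤ i) →
      s i * s j = s j * s i)
    (ha1 : ∀ i, i + 1 < n → s i * g i = g (i + 1) * s i)
    (ha2 : ∀ i, i + 1 < n → g (i + 1) * s i * g (i + 1) = g i * g (i + 1) * s i)
    (ha3 : ∀ i j, i + 1 < n → j < n → j ≠ i → j ≠ i + 1 → s i * g j = g j * s i)
    (mu : ℂ) (hmu : ‖mu‖ = 1)
    (H : Matrix (Fin N) (Fin N) ℂ) (hH : Hᴴ = H)
    (hunit : ∀ j, j < n → (g j)ᴴ * H * g j = H)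
    (hsunit : ∀ i, i + 1 < n → (s i)ᴴ * H * s i = H) :
    ∀ i, i + 1 < n →
      (blk n N (SBf N g s i))ᴴ * blk n N (HBf N g H mu) * blk n N (SBf N g s i)
        = blk n N (HBf N g H mu) := by
  intro i hi
  have hin : i < n := by omega
  have hmu0 : mu ≠ 0 := by
    intro h; rw [h] at hmu; simp at hmu
  -- unit facts
  have hdetg : ∀ j, j < n → IsUnit (g j).det :=
    fun j hj => (Matrix.isUnit_iff_isUnit_det _).mp (hgu j hj)
  have hgg : ∀ j, j < n → g j * (g j)⁻¹ = 1 :=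
    fun j hj => Matrix.mul_nonsing_inv _ (hdetg j hj)
  have hgig : ∀ j, j < n → (g j)⁻¹ * g j = 1 :=
    fun j hj => Matrix.nonsing_inv_mul _ (hdetg j hj)
  have hdets : IsUnit (s i).det := (Matrix.isUnit_iff_isUnit_det _).mp (hsu i hi)
  have hssi : s i * (s i)⁻¹ = 1 := Matrix.mul_nonsing_inv _ hdets
  have hsis : (s i)⁻¹ * s i = 1 := Matrix.nonsing_inv_mul _ hdets
  have huu : g i * (g i)⁻¹ = 1 := hgg i hin
  have huiu : (g i)⁻¹ * g i = 1 := hgig i hin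
  have hvv : g (i + 1) * (g (i + 1))⁻¹ = 1 := hgg (i + 1) hi
  have hviv : (g (i + 1))⁻¹ * g (i + 1) = 1 := hgig (i + 1) hi
  have hsu' : s i * g i = g (i + 1) * s i := ha1 i hi
  have hR2 : g (i + 1) * s i * g (i + 1) = g i * g (i + 1) * s i := ha2 i hi
  -- derived moving relations
  have h_vs : g (i + 1) * s i = s i * g i := hsu'.symm
  have h_vis : (g (i + 1))⁻¹ * s i = s i * (g i)⁻¹ := by
    calc (g (i + 1))⁻¹ * s i
        = (g (i + 1))⁻¹ * (g (i + 1) * s i * (g i)⁻¹) := by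
          rw [h_vs, mul_assoc (s i) (g i) (g i)⁻¹, huu, mul_one]
    _ = s i * (g i)⁻¹ := by rw [← mul_assoc, ← mul_assoc, hviv, one_mul]
  have h_suv : g i * g (i + 1) * s i = s i * (g i * g (i + 1)) := by
    have hx : s i * (g i * g (i + 1)) = g i * g (i + 1) * s i := by
      calc s i * (g i * g (i + 1)) = (s i * g i) * g (i + 1) := (mul_assoc _ _ _).symm
      _ = (g (i + 1) * s i) * g (i + 1) := by rw [hsu']
      _ = g i * g (i + 1) * s i := hR2
    exact hx.symm
  have h_us : g i * s i = s i * (g i * g (i + 1) * (g i)⁻¹) := by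
    calc g i * s i
        = g i * g (i + 1) * ((g (i + 1))⁻¹ * s i) := by
          rw [← mul_assoc, mul_assoc (g i) (g (i + 1)) (g (i + 1))⁻¹, hvv, mul_one]
    _ = g i * g (i + 1) * (s i * (g i)⁻¹) := by rw [h_vis]
    _ = g i * g (i + 1) * s i * (g i)⁻¹ := (mul_assoc _ _ _).symm
    _ = s i * (g i * g (i + 1)) * (g i)⁻¹ := by rw [h_suv]
    _ = s i * (g i * g (i + 1) * (g i)⁻¹) := by rw [mul_assoc]
  have h_uis : (g i)⁻¹ * s i = s i * (g i * (g (i + 1))⁻¹ * (g i)⁻¹) := by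
    have hw : (g i * g (i + 1)) * ((g (i + 1))⁻¹ * (g i)⁻¹) = 1 := by
      rw [mul_assoc (g i) (g (i + 1)) _, ← mul_assoc (g (i + 1)) (g (i + 1))⁻¹ (g i)⁻¹,
        hvv, one_mul, huu]
    have hw' : ((g (i + 1))⁻¹ * (g i)⁻¹) * (g i * g (i + 1)) = 1 := by
      rw [mul_assoc (g (i + 1))⁻¹ (g i)⁻¹ _, ← mul_assoc (g i)⁻¹ (g i) (g (i + 1)),
        huiu, one_mul, hviv]
    have hsw := swap_inv (s i) (g i * g (i + 1)) ((g (i + 1))⁻¹ * (g i)⁻¹) hw hw' h_suv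
    calc (g i)⁻¹ * s i
        = g (i + 1) * (((g (i + 1))⁻¹ * (g i)⁻¹) * s i) := by
          rw [← mul_assoc, ← mul_assoc, hvv, one_mul]
    _ = g (i + 1) * (s i * ((g (i + 1))⁻¹ * (g i)⁻¹)) := by rw [hsw]
    _ = (g (i + 1) * s i) * ((g (i + 1))⁻¹ * (g i)⁻¹) := (mul_assoc _ _ _).symm
    _ = (s i * g i) * ((g (i + 1))⁻¹ * (g i)⁻¹) := by rw [h_vs]
    _ = s i * (g i * (g (i + 1))⁻¹ * (g i)⁻¹) := by
          rw [mul_assoc, ← mul_assoc (g i) (g (i + 1))⁻¹ (g i)⁻¹]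
  -- move lemmas
  have mm0 : ∀ z, (s i)⁻¹ * (s i * z) = z := cancel_left (s i) (s i)⁻¹ hsis
  have mm1 := move (s i) (s i)⁻¹ hssi hsis (g (i + 1)) (g i) h_vs
  have mm2 := move (s i) (s i)⁻¹ hssi hsis (g (i + 1))⁻¹ (g i)⁻¹ h_vis
  have mm3 := move (s i) (s i)⁻¹ hssi hsis (g i) (g i * g (i + 1) * (g i)⁻¹) h_us
  have mm4 := move (s i) (s i)⁻¹ hssi hsis (g i)⁻¹ (g i * (g (i + 1))⁻¹ * (g i)⁻¹) h_uis
  have ccu := cancel_left (g i) (g i)⁻¹ huiu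
  have ccui := cancel_left (g i)⁻¹ (g i) huu
  have ccv := cancel_left (g (i + 1)) (g (i + 1))⁻¹ hviv
  have ccvi := cancel_left (g (i + 1))⁻¹ (g (i + 1)) hvv
  have ddsH := dstar (s i) (s i)⁻¹ H hssi (hsunit i hi)
  have dduH := dstar (g i) (g i)⁻¹ H huu (hunit i hin)
  have ddvH := dstar (g (i + 1)) (g (i + 1))⁻¹ H hvv (hunit (i + 1) hi)
  -- generic-index facts
  have mgen : ∀ j, j < n → j ≠ i → j ≠ i + 1 →
      ∀ z, (s i)⁻¹ * (g j * z) = g j * ((s i)⁻¹ * z) := fun j hj h1 h2 =>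
    move (s i) (s i)⁻¹ hssi hsis (g j) (g j) (by rw [ha3 i j hi hj h1 h2])
  have mgeninv : ∀ j, j < n → j ≠ i → j ≠ i + 1 →
      ∀ z, (s i)⁻¹ * ((g j)⁻¹ * z) = (g j)⁻¹ * ((s i)⁻¹ * z) := fun j hj h1 h2 =>
    move (s i) (s i)⁻¹ hssi hsis (g j)⁻¹ (g j)⁻¹
      (swap_inv (s i) (g j) (g j)⁻¹ (hgg j hj) (hgig j hj) (ha3 i j hi hj h1 h2).symm)
  have cgen : ∀ j, j < n → ∀ z, g j * ((g j)⁻¹ * z) = z :=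
    fun j hj => cancel_left (g j)⁻¹ (g j) (hgg j hj)
  have cgeninv : ∀ j, j < n → ∀ z, (g j)⁻¹ * (g j * z) = z :=
    fun j hj => cancel_left (g j) (g j)⁻¹ (hgig j hj)
  -- reduce to blocks
  rw [blk_conjT, blk_mul, blk_mul]
  refine blk_ext fun r c => ?_
  by_cases hc : (c : ℕ) = i
  · rw [col_i (g := g) (s := s) hi
      (fun m => ∑ a : Fin n, (SBf N g s i a.1 r.1)ᴴ * HBf N g H mu a.1 m) hc, hc]
    by_cases hr : (r : ℕ) = i
    · rw [row_i (g := g) (s := s) hi (fun a => HBf N g H mu a (i + 1)) hr, hr,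
        HBf_diag (g := g) (H := H) (mu := mu) (i + 1), HBf_diag (g := g) (H := H) (mu := mu) i]
      simp only [conjTranspose_mul, conjTranspose_sub, conjTranspose_one, smul_mul_assoc,
        mul_smul_comm, smul_smul, sub_mul, mul_sub, add_mul, mul_add, smul_add, smul_sub, mul_one, one_mul, mul_assoc]
      simp only [ddsH, dduH, ddvH]
      simp only [mul_assoc, mm0, mm1, mm2, mm3, mm4, ccu, ccui, ccv, ccvi, hssi, hsis,
        huu, huiu, hvv, hviv, mul_one]
      all_goals (match_scalars <;> field_simp <;> ring)
    · by_cases hr' : (r : ℕ) = i + 1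
      · rw [row_i1 (g := g) (s := s) hi (fun a => HBf N g H mu a (i + 1)) hr', hr',
          HBf_lt (g := g) (H := H) (mu := mu) (Nat.lt_succ_self i),
          HBf_diag (g := g) (H := H) (mu := mu) (i + 1),
          HBf_gt (g := g) (H := H) (mu := mu) (Nat.lt_succ_self i)]
        simp only [conjTranspose_mul, conjTranspose_sub, conjTranspose_one, smul_mul_assoc,
          mul_smul_comm, smul_smul, sub_mul, mul_sub, add_mul, mul_add, smul_add, smul_sub, mul_one, one_mul, mul_assoc]
        simp only [ddsH, dduH, ddvH]
        simp only [mul_assoc, mm0, mm1, mm2, mm3, mm4, ccu, ccui, ccv, ccvi, hssi, hsis,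
          huu, huiu, hvv, hviv, mul_one]
        all_goals (match_scalars <;> field_simp <;> ring)
      · rw [row_gen (g := g) (s := s) (fun a => HBf N g H mu a (i + 1)) hr hr']
        rcases Nat.lt_or_ge r.1 i with hlt | hge
        · rw [HBf_lt (g := g) (H := H) (mu := mu) (by omega : (r : ℕ) < i + 1),
            HBf_lt (g := g) (H := H) (mu := mu) hlt]
          simp only [conjTranspose_mul, conjTranspose_sub, conjTranspose_one, smul_mul_assoc,
            mul_smul_comm, smul_smul, sub_mul, mul_sub, add_mul, mul_add, smul_add, smul_sub, mul_one, one_mul, mul_assoc]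
          simp only [ddsH, dduH, ddvH]
          simp only [mul_assoc, mm0, mm1, mm2, mm3, mm4, ccu, ccui, ccv, ccvi, hssi, hsis,
            huu, huiu, hvv, hviv, mul_one, mgen r.1 r.2 hr hr', mgeninv r.1 r.2 hr hr', cgen r.1 r.2, cgeninv r.1 r.2, hgg r.1 r.2, hgig r.1 r.2]
          all_goals (match_scalars <;> field_simp <;> ring)
        · have hgt : i + 1 < (r : ℕ) := by omega
          rw [HBf_gt (g := g) (H := H) (mu := mu) (by omega : i + 1 < (r : ℕ)),
            HBf_gt (g := g) (H := H) (mu := mu) (by omega : i < (r : ℕ))]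
          simp only [conjTranspose_mul, conjTranspose_sub, conjTranspose_one, smul_mul_assoc,
            mul_smul_comm, smul_smul, sub_mul, mul_sub, add_mul, mul_add, smul_add, smul_sub, mul_one, one_mul, mul_assoc]
          simp only [ddsH, dduH, ddvH]
          simp only [mul_assoc, mm0, mm1, mm2, mm3, mm4, ccu, ccui, ccv, ccvi, hssi, hsis,
            huu, huiu, hvv, hviv, mul_one, mgen r.1 r.2 hr hr', mgeninv r.1 r.2 hr hr', cgen r.1 r.2, cgeninv r.1 r.2, hgg r.1 r.2, hgig r.1 r.2]
          all_goals (match_scalars <;> field_simp <;> ring)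
  · by_cases hc' : (c : ℕ) = i + 1
    · rw [col_i1 (g := g) (s := s) hi
        (fun m => ∑ a : Fin n, (SBf N g s i a.1 r.1)ᴴ * HBf N g H mu a.1 m) hc', hc']
      by_cases hr : (r : ℕ) = i
      · rw [row_i (g := g) (s := s) hi (fun a => HBf N g H mu a i) hr,
          row_i (g := g) (s := s) hi (fun a => HBf N g H mu a (i + 1)) hr, hr,
          HBf_gt (g := g) (H := H) (mu := mu) (Nat.lt_succ_self i),
          HBf_diag (g := g) (H := H) (mu := mu) (i + 1),
          HBf_lt (g := g) (H := H) (mu := mu) (Nat.lt_succ_self i)]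
        simp only [conjTranspose_mul, conjTranspose_sub, conjTranspose_one, smul_mul_assoc,
          mul_smul_comm, smul_smul, sub_mul, mul_sub, add_mul, mul_add, smul_add, smul_sub, mul_one, one_mul, mul_assoc]
        simp only [ddsH, dduH, ddvH]
        simp only [mul_assoc, mm0, mm1, mm2, mm3, mm4, ccu, ccui, ccv, ccvi, hssi, hsis,
          huu, huiu, hvv, hviv, mul_one]
        all_goals (match_scalars <;> field_simp <;> ring)
      · by_cases hr' : (r : ℕ) = i + 1
        · rw [row_i1 (g := g) (s := s) hi (fun a => HBf N g H mu a i) hr',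
            row_i1 (g := g) (s := s) hi (fun a => HBf N g H mu a (i + 1)) hr', hr',
            HBf_diag (g := g) (H := H) (mu := mu) i,
            HBf_gt (g := g) (H := H) (mu := mu) (Nat.lt_succ_self i),
            HBf_lt (g := g) (H := H) (mu := mu) (Nat.lt_succ_self i),
            HBf_diag (g := g) (H := H) (mu := mu) (i + 1)]
          simp only [conjTranspose_mul, conjTranspose_sub, conjTranspose_one, smul_mul_assoc,
            mul_smul_comm, smul_smul, sub_mul, mul_sub, add_mul, mul_add, smul_add, smul_sub, mul_one, one_mul, mul_assoc]
          simp only [ddsH, dduH, ddvH]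
          simp only [mul_assoc, mm0, mm1, mm2, mm3, mm4, ccu, ccui, ccv, ccvi, hssi, hsis,
            huu, huiu, hvv, hviv, mul_one]
          all_goals (match_scalars <;> field_simp <;> ring)
        · rw [row_gen (g := g) (s := s) (fun a => HBf N g H mu a i) hr hr',
            row_gen (g := g) (s := s) (fun a => HBf N g H mu a (i + 1)) hr hr']
          rcases Nat.lt_or_ge r.1 i with hlt | hge
          · rw [HBf_lt (g := g) (H := H) (mu := mu) hlt,
              HBf_lt (g := g) (H := H) (mu := mu) (by omega : (r : ℕ) < i + 1)]
            simp only [conjTranspose_mul, conjTranspose_sub, conjTranspose_one, smul_mul_assoc,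
              mul_smul_comm, smul_smul, sub_mul, mul_sub, add_mul, mul_add, smul_add, smul_sub, mul_one, one_mul, mul_assoc]
            simp only [ddsH, dduH, ddvH]
            simp only [mul_assoc, mm0, mm1, mm2, mm3, mm4, ccu, ccui, ccv, ccvi, hssi, hsis,
              huu, huiu, hvv, hviv, mul_one, mgen r.1 r.2 hr hr', mgeninv r.1 r.2 hr hr', cgen r.1 r.2, cgeninv r.1 r.2, hgg r.1 r.2, hgig r.1 r.2]
            all_goals (match_scalars <;> field_simp <;> ring)
          · have hgt : i + 1 < (r : ℕ) := by omega
            rw [HBf_gt (g := g) (H := H) (mu := mu) (by omega : i < (r : ℕ)),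
              HBf_gt (g := g) (H := H) (mu := mu) hgt]
            simp only [conjTranspose_mul, conjTranspose_sub, conjTranspose_one, smul_mul_assoc,
              mul_smul_comm, smul_smul, sub_mul, mul_sub, add_mul, mul_add, smul_add, smul_sub, mul_one, one_mul, mul_assoc]
            simp only [ddsH, dduH, ddvH]
            simp only [mul_assoc, mm0, mm1, mm2, mm3, mm4, ccu, ccui, ccv, ccvi, hssi, hsis,
              huu, huiu, hvv, hviv, mul_one, mgen r.1 r.2 hr hr', mgeninv r.1 r.2 hr hr', cgen r.1 r.2, cgeninv r.1 r.2, hgg r.1 r.2, hgig r.1 r.2]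
            all_goals (match_scalars <;> field_simp <;> ring)
    · rw [col_gen (g := g) (s := s)
        (fun m => ∑ a : Fin n, (SBf N g s i a.1 r.1)ᴴ * HBf N g H mu a.1 m) hc hc']
      by_cases hr : (r : ℕ) = i
      · rw [row_i (g := g) (s := s) hi (fun a => HBf N g H mu a c.1) hr, hr]
        rcases Nat.lt_or_ge c.1 i with hlt | hge
        · rw [HBf_gt (g := g) (H := H) (mu := mu) (by omega : (c : ℕ) < i + 1),
            HBf_gt (g := g) (H := H) (mu := mu) hlt]
          simp only [conjTranspose_mul, conjTranspose_sub, conjTranspose_one, smul_mul_assoc,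
            mul_smul_comm, smul_smul, sub_mul, mul_sub, add_mul, mul_add, smul_add, smul_sub, mul_one, one_mul, mul_assoc]
          simp only [ddsH, dduH, ddvH]
          simp only [mul_assoc, mm0, mm1, mm2, mm3, mm4, ccu, ccui, ccv, ccvi, hssi, hsis,
            huu, huiu, hvv, hviv, mul_one, mgen c.1 c.2 hc hc', mgeninv c.1 c.2 hc hc', cgen c.1 c.2, cgeninv c.1 c.2, hgg c.1 c.2, hgig c.1 c.2]
          all_goals (match_scalars <;> field_simp <;> ring)
        · have hgt : i + 1 < (c : ℕ) := by omega
          rw [HBf_lt (g := g) (H := H) (mu := mu) hgt,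
            HBf_lt (g := g) (H := H) (mu := mu) (by omega : i < (c : ℕ))]
          simp only [conjTranspose_mul, conjTranspose_sub, conjTranspose_one, smul_mul_assoc,
            mul_smul_comm, smul_smul, sub_mul, mul_sub, add_mul, mul_add, smul_add, smul_sub, mul_one, one_mul, mul_assoc]
          simp only [ddsH, dduH, ddvH]
          simp only [mul_assoc, mm0, mm1, mm2, mm3, mm4, ccu, ccui, ccv, ccvi, hssi, hsis,
            huu, huiu, hvv, hviv, mul_one, mgen c.1 c.2 hc hc', mgeninv c.1 c.2 hc hc', cgen c.1 c.2, cgeninv c.1 c.2, hgg c.1 c.2, hgig c.1 c.2]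
          all_goals (match_scalars <;> field_simp <;> ring)
      · by_cases hr' : (r : ℕ) = i + 1
        · rw [row_i1 (g := g) (s := s) hi (fun a => HBf N g H mu a c.1) hr', hr']
          rcases Nat.lt_or_ge c.1 i with hlt | hge
          · rw [HBf_gt (g := g) (H := H) (mu := mu) hlt,
              HBf_gt (g := g) (H := H) (mu := mu) (by omega : (c : ℕ) < i + 1)]
            simp only [conjTranspose_mul, conjTranspose_sub, conjTranspose_one, smul_mul_assoc,
              mul_smul_comm, smul_smul, sub_mul, mul_sub, add_mul, mul_add, smul_add, smul_sub, mul_one, one_mul, mul_assoc]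
            simp only [ddsH, dduH, ddvH]
            simp only [mul_assoc, mm0, mm1, mm2, mm3, mm4, ccu, ccui, ccv, ccvi, hssi, hsis,
              huu, huiu, hvv, hviv, mul_one, mgen c.1 c.2 hc hc', mgeninv c.1 c.2 hc hc', cgen c.1 c.2, cgeninv c.1 c.2, hgg c.1 c.2, hgig c.1 c.2]
            all_goals (match_scalars <;> field_simp <;> ring)
          · have hgt : i + 1 < (c : ℕ) := by omega
            rw [HBf_lt (g := g) (H := H) (mu := mu) (by omega : i < (c : ℕ)),
              HBf_lt (g := g) (H := H) (mu := mu) hgt]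
            simp only [conjTranspose_mul, conjTranspose_sub, conjTranspose_one, smul_mul_assoc,
              mul_smul_comm, smul_smul, sub_mul, mul_sub, add_mul, mul_add, smul_add, smul_sub, mul_one, one_mul, mul_assoc]
            simp only [ddsH, dduH, ddvH]
            simp only [mul_assoc, mm0, mm1, mm2, mm3, mm4, ccu, ccui, ccv, ccvi, hssi, hsis,
              huu, huiu, hvv, hviv, mul_one, mgen c.1 c.2 hc hc', mgeninv c.1 c.2 hc hc', cgen c.1 c.2, cgeninv c.1 c.2, hgg c.1 c.2, hgig c.1 c.2]
            all_goals (match_scalars <;> field_simp <;> ring)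
        · rw [row_gen (g := g) (s := s) (fun a => HBf N g H mu a c.1) hr hr']
          rcases Nat.lt_trichotomy r.1 c.1 with hlt | heq | hgt
          · rw [HBf_lt (g := g) (H := H) (mu := mu) hlt]
            simp only [conjTranspose_mul, conjTranspose_sub, conjTranspose_one, smul_mul_assoc,
              mul_smul_comm, smul_smul, sub_mul, mul_sub, add_mul, mul_add, smul_add, smul_sub, mul_one, one_mul, mul_assoc]
            simp only [ddsH, dduH, ddvH]
            simp only [mul_assoc, mm0, mm1, mm2, mm3, mm4, ccu, ccui, ccv, ccvi, hssi, hsis,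
              huu, huiu, hvv, hviv, mul_one, mgen r.1 r.2 hr hr', mgeninv r.1 r.2 hr hr', cgen r.1 r.2, cgeninv r.1 r.2, hgg r.1 r.2, hgig r.1 r.2, mgen c.1 c.2 hc hc', mgeninv c.1 c.2 hc hc', cgen c.1 c.2, cgeninv c.1 c.2, hgg c.1 c.2, hgig c.1 c.2]
            all_goals (match_scalars <;> field_simp <;> ring)
          · rw [← heq, HBf_diag (g := g) (H := H) (mu := mu) r.1]
            simp only [conjTranspose_mul, conjTranspose_sub, conjTranspose_one, smul_mul_assoc,
              mul_smul_comm, smul_smul, sub_mul, mul_sub, add_mul, mul_add, smul_add, smul_sub, mul_one, one_mul, mul_assoc]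
            simp only [ddsH, dduH, ddvH]
            simp only [mul_assoc, mm0, mm1, mm2, mm3, mm4, ccu, ccui, ccv, ccvi, hssi, hsis,
              huu, huiu, hvv, hviv, mul_one, mgen r.1 r.2 hr hr', mgeninv r.1 r.2 hr hr', cgen r.1 r.2, cgeninv r.1 r.2, hgg r.1 r.2, hgig r.1 r.2]
            all_goals (match_scalars <;> field_simp <;> ring)
          · rw [HBf_gt (g := g) (H := H) (mu := mu) hgt]
            simp only [conjTranspose_mul, conjTranspose_sub, conjTranspose_one, smul_mul_assoc,
              mul_smul_comm, smul_smul, sub_mul, mul_sub, add_mul, mul_add, smul_add, smul_sub, mul_one, one_mul, mul_assoc]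
            simp only [ddsH, dduH, ddvH]
            simp only [mul_assoc, mm0, mm1, mm2, mm3, mm4, ccu, ccui, ccv, ccvi, hssi, hsis,
              huu, huiu, hvv, hviv, mul_one, mgen r.1 r.2 hr hr', mgeninv r.1 r.2 hr hr', cgen r.1 r.2, cgeninv r.1 r.2, hgg r.1 r.2, hgig r.1 r.2, mgen c.1 c.2 hc hc', mgeninv c.1 c.2 hc hc', cgen c.1 c.2, cgeninv c.1 c.2, hgg c.1 c.2, hgig c.1 c.2]
            all_goals (match_scalars <;> field_simp <;> ring)


end aux

/-- The Long–Moody matrices `S_i` preserve the Hermitian form `H̃`: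
`S_iᴴ H̃ S_i = H̃`. -/
theorem S_preserves_Ht
    (N n : ℕ) (hN : 1 ≤ N) (hn : 2 ≤ n)
    (g s : ℕ → Matrix (Fin N) (Fin N) ℂ)
    (hgu : ∀ j, j < n → IsUnit (g j))
    (hsu : ∀ i, i + 1 < n → IsUnit (s i))
    (hbr1 : ∀ i, i + 2 < n → s i * s (i + 1) * s i = s (i + 1) * s i * s (i + 1))
    (hbr2 : ∀ i j, i + 1 < n → j + 1 < n → (i + 2 ≤ j ∨ j + 2 ≤ i) →
      s i * s j = s j * s i)
    (ha1 : ∀ i, i + 1 < n → s i * g i = g (i + 1) * s i)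
    (ha2 : ∀ i, i + 1 < n → g (i + 1) * s i * g (i + 1) = g i * g (i + 1) * s i)
    (ha3 : ∀ i j, i + 1 < n → j < n → j ≠ i → j ≠ i + 1 → s i * g j = g j * s i)
    (mu : ℂ) (hmu : ‖mu‖ = 1)
    (H : Matrix (Fin N) (Fin N) ℂ) (hH : Hᴴ = H)
    (hunit : ∀ j, j < n → (g j)ᴴ * H * g j = H)
    (hsunit : ∀ i, i + 1 < n → (s i)ᴴ * H * s i = H) :
    ∀ i, i + 1 < n →
      (S n N g s i)ᴴ * Ht n N g H mu * S n N g s i = Ht n N g H mu := by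
  intro i hi
  have key := S_preserves_Ht' N n hN hn g s hgu hsu hbr1 hbr2 ha1 ha2 ha3 mu hmu H hH
    hunit hsunit i hi
  rw [show S n N g s i = blk n N (SBf N g s i) from rfl,
    show Ht n N g H mu = blk n N (HBf N g H mu) from rfl]
  exact key

end KLM
end

section
/- The subspace L is contained in the kernel of H̃: for every x ∈ L, H̃ x = 0. -/
open Matrix

namespace KLM

variable {k : Type*} [Field k]

/-- `K = {(w_1,…,w_n) : g_j w_j = w_j for all j}` (blockwise fixed vectors). -/
def Kset (n N : ℕ) (g : ℕ → Matrix (Fin N) (Fin N) k) : Set ((Fin n × Fin N) → k) :=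
  {w | ∀ j : Fin n, (g (j : ℕ)).mulVec (fun a => w (j, a)) = fun a => w (j, a)}

/-- The ordered product `G_1 G_2 ⋯ G_n`. -/
def Gprod (n N : ℕ) (g : ℕ → Matrix (Fin N) (Fin N) k) (lam : k) :
    Matrix (Fin n × Fin N) (Fin n × Fin N) k :=
  ((List.finRange n).map fun j => G n N g lam (j : ℕ)).prod

/-- `L = ker (G_1 G_2 ⋯ G_n − 1)`. -/
def Lset (n N : ℕ) (g : ℕ → Matrix (Fin N) (Fin N) k) (lam : k) :
    Set ((Fin n × Fin N) → k) :=
  {x | (Gprod n N g lam - 1).mulVec x = 0}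

section Aux

variable {n N : ℕ}

lemma blk_mulVec (B : ℕ → ℕ → Matrix (Fin N) (Fin N) k) (x : (Fin n × Fin N) → k)
    (p : Fin n × Fin N) :
    (blk n N B).mulVec x p
      = ∑ c : Fin n, (B (p.1 : ℕ) (c : ℕ)).mulVec (fun a => x (c, a)) p.2 := by
  simp only [blk, Matrix.mulVec, dotProduct, Matrix.of_apply]
  rw [Fintype.sum_prod_type]

lemma G_mulVec_offdiag (g : ℕ → Matrix (Fin N) (Fin N) k) (lam : k) (j : ℕ)
    (v : (Fin n × Fin N) → k) (p : Fin n × Fin N) (hp : (p.1 : ℕ) ≠ j) :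
    (G n N g lam j).mulVec v p = v p := by
  rw [G, blk_mulVec, Finset.sum_eq_single p.1]
  · rw [if_neg hp, if_pos rfl, Matrix.one_mulVec]
  · intro c _ hc
    have h2 : (p.1 : ℕ) ≠ (c : ℕ) := fun h => hc (Fin.val_injective h).symm
    rw [if_neg hp, if_neg h2, Matrix.zero_mulVec, Pi.zero_apply]
  · intro h; exact absurd (Finset.mem_univ p.1) h

lemma listprod_mulVec_fix (g : ℕ → Matrix (Fin N) (Fin N) k) (lam : k) (l : List ℕ)
    (v : (Fin n × Fin N) → k) (p : Fin n × Fin N) (hp : ∀ j ∈ l, (p.1 : ℕ) ≠ j) :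
    ((l.map (G n N g lam)).prod).mulVec v p = v p := by
  induction l with
  | nil => simp
  | cons j t ih =>
    rw [List.map_cons, List.prod_cons, ← Matrix.mulVec_mulVec,
      G_mulVec_offdiag g lam j _ p (hp j List.mem_cons_self)]
    exact ih fun j' hj' => hp j' (List.mem_cons_of_mem _ hj')

lemma G_fix (g : ℕ → Matrix (Fin N) (Fin N) k) (lam : k) (x : (Fin n × Fin N) → k)
    (hx : (Gprod n N g lam).mulVec x = x) (m : ℕ) (hm : m < n) :
    (G n N g lam m).mulVec x = x := by
  have hrange : Gprod n N g lam = ((List.range n).map (G n N g lam)).prod := by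
    have hlist : (do let a ← List.finRange n; pure ((a : ℕ))) = List.range n := by
      simp [← List.map_eq_flatMap]
    rw [Gprod, hlist]
  have h1 : ((List.range n).map (G n N g lam)).prod.mulVec x = x := by
    rw [← hrange]; exact hx
  have hP : ∀ i, ((List.range' i (n - i)).map (G n N g lam)).prod.mulVec x = x := by
    intro i
    funext p
    rcases lt_or_ge (p.1 : ℕ) i with h | h
    · exact listprod_mulVec_fix g lam _ x p (fun j hj => by
        have := List.mem_range'_1.mp hj; omega)
    · have hin : i ≤ n := le_trans h (le_of_lt p.1.isLt)
      have hsplit : List.range n = List.range i ++ List.range' i (n - i) := by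
        have h0 := List.range'_append_1 (s := 0) (m := i) (n := n - i)
        simp only [Nat.zero_add] at h0
        rw [List.range_eq_range', List.range_eq_range', h0]
        congr 1
        omega
      have h2 : ((List.range i).map (G n N g lam)).prod.mulVec
            (((List.range' i (n - i)).map (G n N g lam)).prod.mulVec x) p
          = (((List.range' i (n - i)).map (G n N g lam)).prod.mulVec x) p :=
        listprod_mulVec_fix g lam _ _ p (fun j hj => by
          have := List.mem_range.mp hj; omega)
      rw [← h2, Matrix.mulVec_mulVec, ← List.prod_append, ← List.map_append, ← hsplit]
      exact congrFun h1 p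
  have key := hP m
  have hsucc : List.range' m (n - m) = m :: List.range' (m + 1) (n - (m + 1)) := by
    have hnm : n - m = (n - (m + 1)) + 1 := by omega
    rw [hnm, List.range'_succ]
  rw [hsucc, List.map_cons, List.prod_cons, ← Matrix.mulVec_mulVec, hP (m + 1)] at key
  exact key

lemma G_block (g : ℕ → Matrix (Fin N) (Fin N) k) (lam : k) (x : (Fin n × Fin N) → k)
    (hx : (Gprod n N g lam).mulVec x = x) (j : Fin n) (b : Fin N) :
    ∑ c : Fin n,
      ((if (c : ℕ) < (j : ℕ) then lam • (g (c : ℕ) - 1)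
        else if (c : ℕ) = (j : ℕ) then lam • g (j : ℕ)
        else g (c : ℕ) - 1).mulVec (fun a => x (c, a))) b = x (j, b) := by
  have h := congrFun (G_fix g lam x hx (j : ℕ) j.isLt) (j, b)
  rw [G, blk_mulVec] at h
  simpa using h

end Aux

/-- The subspace `L = ker(G_1 ⋯ G_n − 1)` (with `λ = μ²`) is contained in the
kernel of `H̃`. -/
theorem L_subset_ker_Ht
    (N n : ℕ) (hN : 1 ≤ N) (hn : 2 ≤ n)
    (g : ℕ → Matrix (Fin N) (Fin N) ℂ)
    (hgu : ∀ j, j < n → IsUnit (g j))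
    (mu : ℂ) (hmu : ‖mu‖ = 1)
    (H : Matrix (Fin N) (Fin N) ℂ) (hH : Hᴴ = H)
    (hunit : ∀ j, j < n → (g j)ᴴ * H * g j = H) :
    ∀ x ∈ Lset n N g (mu ^ 2), (Ht n N g H mu).mulVec x = 0 := by
  intro x hx
  have hmu0 : mu ≠ 0 := by
    intro h; rw [h] at hmu; simp at hmu
  have hmul : mu⁻¹ * mu ^ 2 = mu := by
    field_simp
  have hx' : (Gprod n N g (mu ^ 2)).mulVec x = x := by
    rw [Lset, Set.mem_setOf_eq, Matrix.sub_mulVec, Matrix.one_mulVec, sub_eq_zero] at hx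
    exact hx
  funext p
  rw [Pi.zero_apply, Ht, blk_mulVec]
  set j : Fin n := p.1 with hjdef
  set E : Matrix (Fin N) (Fin N) ℂ := mu⁻¹ • (H * ((g (j : ℕ))⁻¹ - 1)) with hE
  have hginv : (g (j : ℕ))⁻¹ * g (j : ℕ) = 1 :=
    Matrix.nonsing_inv_mul _ ((Matrix.isUnit_iff_isUnit_det _).mp (hgu _ j.isLt))
  have key : ∀ c : Fin n,
      (if (j : ℕ) < (c : ℕ) then mu⁻¹ • (H * ((g (j : ℕ))⁻¹ - 1) * (g (c : ℕ) - 1))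
       else if (j : ℕ) = (c : ℕ) then
         mu⁻¹ • (H * ((g (j : ℕ))⁻¹ - mu ^ 2 • (1 : Matrix (Fin N) (Fin N) ℂ)) * (g (j : ℕ) - 1))
       else mu • (H * ((g (j : ℕ))⁻¹ - 1) * (g (c : ℕ) - 1)))
      = E * (if (c : ℕ) < (j : ℕ) then mu ^ 2 • (g (c : ℕ) - 1)
             else if (c : ℕ) = (j : ℕ) then mu ^ 2 • g (j : ℕ)
             else g (c : ℕ) - 1)
        - (if c = j then E else 0) := by
    intro c
    rcases lt_trichotomy ((j : ℕ)) ((c : ℕ)) with h | h | h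
    · have h1 : ¬ ((c : ℕ) < (j : ℕ)) := by omega
      have h2 : ¬ ((c : ℕ) = (j : ℕ)) := by omega
      have h3 : c ≠ j := fun hcj => h2 (by rw [hcj])
      rw [if_pos h, if_neg h1, if_neg h2, if_neg h3, sub_zero, hE, Matrix.smul_mul,
        Matrix.mul_assoc]
    · have h1 : ¬ ((j : ℕ) < (c : ℕ)) := by omega
      have h2 : ¬ ((c : ℕ) < (j : ℕ)) := by omega
      have h3 : c = j := Fin.ext h.symm
      rw [if_neg h1, if_pos h, if_neg h2, if_pos h.symm, if_pos h3, hE]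
      have expand : ((g (j : ℕ))⁻¹ - mu ^ 2 • (1 : Matrix (Fin N) (Fin N) ℂ)) * (g (j : ℕ) - 1)
          = ((g (j : ℕ))⁻¹ - 1) * (mu ^ 2 • g (j : ℕ)) - ((g (j : ℕ))⁻¹ - 1) := by
        simp only [sub_mul, mul_sub, Matrix.smul_mul, Matrix.mul_smul, one_mul, mul_one,
          smul_sub, hginv]
        abel
      rw [Matrix.mul_assoc, expand, mul_sub, smul_sub, Matrix.smul_mul, ← Matrix.mul_assoc]
    · have h1 : ¬ ((j : ℕ) < (c : ℕ)) := by omega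
      have h2 : ¬ ((j : ℕ) = (c : ℕ)) := by omega
      have h3 : c ≠ j := fun hcj => h2 (by rw [hcj])
      rw [if_neg h1, if_neg h2, if_pos h, if_neg h3, sub_zero, hE, Matrix.smul_mul,
        Matrix.mul_smul, smul_smul, hmul, Matrix.mul_assoc]
  calc
    ∑ c : Fin n,
        ((if (j : ℕ) < (c : ℕ) then mu⁻¹ • (H * ((g (j : ℕ))⁻¹ - 1) * (g (c : ℕ) - 1))
          else if (j : ℕ) = (c : ℕ) then
            mu⁻¹ • (H * ((g (j : ℕ))⁻¹ - mu ^ 2 • (1 : Matrix (Fin N) (Fin N) ℂ)) * (g (j : ℕ) - 1))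
          else mu • (H * ((g (j : ℕ))⁻¹ - 1) * (g (c : ℕ) - 1))).mulVec (fun a => x (c, a))) p.2
      = ∑ c : Fin n,
          ((E.mulVec ((if (c : ℕ) < (j : ℕ) then mu ^ 2 • (g (c : ℕ) - 1)
              else if (c : ℕ) = (j : ℕ) then mu ^ 2 • g (j : ℕ)
              else g (c : ℕ) - 1).mulVec (fun a => x (c, a)))) p.2
            - (((if c = j then E else 0).mulVec (fun a => x (c, a))) p.2)) := by
        refine Finset.sum_congr rfl fun c _ => ?_
        rw [key c, Matrix.sub_mulVec, Pi.sub_apply, Matrix.mulVec_mulVec]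
    _ = (∑ c : Fin n,
          (E.mulVec ((if (c : ℕ) < (j : ℕ) then mu ^ 2 • (g (c : ℕ) - 1)
              else if (c : ℕ) = (j : ℕ) then mu ^ 2 • g (j : ℕ)
              else g (c : ℕ) - 1).mulVec (fun a => x (c, a)))) p.2)
        - ∑ c : Fin n, (((if c = j then E else 0).mulVec (fun a => x (c, a))) p.2) := by
        rw [Finset.sum_sub_distrib]
    _ = (E.mulVec (fun b => ∑ c : Fin n,
            ((if (c : ℕ) < (j : ℕ) then mu ^ 2 • (g (c : ℕ) - 1)
              else if (c : ℕ) = (j : ℕ) then mu ^ 2 • g (j : ℕ)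
              else g (c : ℕ) - 1).mulVec (fun a => x (c, a))) b)) p.2
        - (E.mulVec (fun a => x (j, a))) p.2 := by
        congr 1
        · simp only [Matrix.mulVec, dotProduct, Finset.mul_sum]
          exact Finset.sum_comm
        · rw [Finset.sum_eq_single j]
          · rw [if_pos rfl]
          · intro c _ hc
            rw [if_neg hc, Matrix.zero_mulVec, Pi.zero_apply]
          · intro h; exact absurd (Finset.mem_univ j) h
    _ = 0 := by
        have hb : (fun b => ∑ c : Fin n,
            ((if (c : ℕ) < (j : ℕ) then mu ^ 2 • (g (c : ℕ) - 1)
              else if (c : ℕ) = (j : ℕ) then mu ^ 2 • g (j : ℕ)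
              else g (c : ℕ) - 1).mulVec (fun a => x (c, a))) b)
            = (fun a => x (j, a)) := by
          funext b
          exact G_block g (mu ^ 2) x hx' j b
        rw [hb, sub_self]

end KLM
end
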